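/- Let G and H be graphs where G is nontrivial, non-complete and connected. Then κ(G ∘ H) = κ(G)·|V(H)|, where G ∘ H is the lexicographic product. -/

import Mathlib

open SimpleGraph

/-- An `S`-Steiner tree in `G`: a subgraph that is a tree and contains `S`. -/
def IsSteinerTree {V : Type*} (G : SimpleGraph V) (S : Set V) (T : G.Subgraph) : Prop :=
  T.coe.IsTree ∧ S ⊆ T.verts

/-- Two `S`-trees are internally disjoint: edge-disjoint and meeting exactly in `S`. -/
def IntDisjoint {V : Type*} (S : Set V) {G : SimpleGraph V} (T₁ T₂ : G.Subgraph) : Prop :=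
  T₁.verts ∩ T₂.verts = S ∧ ∀ u v, ¬ (T₁.Adj u v ∧ T₂.Adj u v)

/-- `κ(S)`: the maximum number of pairwise internally disjoint `S`-Steiner trees. -/
noncomputable def steinerConn {V : Type*} (G : SimpleGraph V) (S : Set V) : ℕ :=
  sSup {n | ∃ f : Fin n → G.Subgraph,
    (∀ i, IsSteinerTree G S (f i)) ∧ ∀ i j, i ≠ j → IntDisjoint S (f i) (f j)}

/-- The generalized `k`-connectivity `κ_k(G)`. -/
noncomputable def genConn {V : Type*} (G : SimpleGraph V) (k : ℕ) : ℕ :=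
  sInf {c | ∃ S : Set V, S.ncard = k ∧ steinerConn G S = c}

/-- `G` is `k`-connected: more than `k` vertices, and removing fewer than `k`
vertices leaves it connected. -/
def KConnected {V : Type*} (G : SimpleGraph V) (k : ℕ) : Prop :=
  k < Nat.card V ∧ ∀ s : Set V, s.Finite → s.ncard < k → (G.induce sᶜ).Connected

/-- The vertex connectivity `κ(G)`. -/
noncomputable def vconn {V : Type*} (G : SimpleGraph V) : ℕ :=
  sSup {k | KConnected G k}

/-- The lexicographic product `G ∘ H`. -/
def lexProd {V W : Type*} (G : SimpleGraph V) (H : SimpleGraph W) : SimpleGraph (V × W) where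
  Adj a b := G.Adj a.1 b.1 ∨ (a.1 = b.1 ∧ H.Adj a.2 b.2)
  symm := by
    constructor
    intro a b h
    rcases h with h | ⟨h1, h2⟩
    · exact Or.inl h.symm
    · exact Or.inr ⟨h1.symm, h2.symm⟩
  loopless := by
    constructor
    intro a h
    rcases h with h | ⟨_, h2⟩
    · exact G.loopless.irrefl _ h
    · exact H.loopless.irrefl _ h2

/-- The star `K_{1,m}` on `m + 1` vertices: center `none`, leaves `some i`. -/
def starGraph (m : ℕ) : SimpleGraph (Option (Fin m)) where
  Adj u v := u ≠ v ∧ (u = none ∨ v = none)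
  symm := by constructor; intro u v ⟨h1, h2⟩; exact ⟨h1.symm, h2.symm⟩
  loopless := by constructor; intro u ⟨h1, _⟩; exact h1 rfl

/-!
A non-complete graph `G` has a separating set `S` with `|S| ≤ κ(G)`, and `S × V(H)` separates
`G ∘ H`, because projecting to the first coordinate sends edges of `G ∘ H` to edges or loops of
`G`. Conversely, if `T` has fewer than `κ(G)|V(H)|` vertices, fewer than `κ(G)` fibres
`{u} × V(H)` lie inside `T`, so the projection of the rest is a connected subgraph of `G` with at
least two vertices. Any two vertices of `G ∘ H` over adjacent vertices of `G` are adjacent, so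
every surviving vertex reaches a fixed representative of its fibre through a neighbouring fibre,
and the representatives are linked along paths of `G`.
-/

open Set

theorem SimpleGraph.Connected.of_surjective_of_adj_or_eq {α β : Type*} {A : SimpleGraph α}
    {B : SimpleGraph β} (hA : A.Connected) (f : α → β) (hf : Function.Surjective f)
    (hadj : ∀ a b, A.Adj a b → f a = f b ∨ B.Adj (f a) (f b)) : B.Connected := by
  have : Nonempty β := hA.nonempty.map f
  refine Connected.mk fun x y => ?_
  obtain ⟨a, rfl⟩ := hf x
  obtain ⟨b, rfl⟩ := hf y
  rw [reachable_iff_reflTransGen]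
  refine ((reachable_iff_reflTransGen a b).mp (hA.preconnected a b)).lift' f fun a b h => ?_
  rcases hadj a b h with heq | hB
  · exact (heq ▸ .refl : Relation.ReflTransGen B.Adj (f a) (f b))
  · exact .single hB

theorem SimpleGraph.not_connected_induce_pair {V : Type*} {G : SimpleGraph V} {u v : V}
    (huv : u ≠ v) (hnadj : ¬ G.Adj u v) : ¬ (G.induce {u, v}).Connected := by
  have hbot : G.induce {u, v} = ⊥ := by
    ext ⟨a, ha⟩ ⟨b, hb⟩
    simp only [comap_adj, Function.Embedding.subtype_apply, bot_adj, iff_false]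
    rcases ha with rfl | rfl <;> rcases hb with rfl | rfl
    all_goals first | exact G.loopless.irrefl _ | exact hnadj | exact fun h => hnadj h.symm
  rw [hbot, connected_bot_iff]
  rintro ⟨hsub, -⟩
  exact huv (congrArg Subtype.val (hsub.elim ⟨u, by simp⟩ ⟨v, by simp⟩))

section VertexConnectivity

variable {V : Type*} {G : SimpleGraph V} {k : ℕ}

theorem bddAbove_kConnected (G : SimpleGraph V) : BddAbove {k | KConnected G k} :=
  ⟨Nat.card V, fun _ hk => hk.1.le⟩

theorem KConnected.le_vconn (h : KConnected G k) : k ≤ vconn G :=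
  le_csSup (bddAbove_kConnected G) h

theorem kConnected_vconn [Finite V] [Nonempty V] (G : SimpleGraph V) :
    KConnected G (vconn G) := by
  have hzero : KConnected G 0 := ⟨Nat.card_pos, fun _ _ h => absurd h (Nat.not_lt_zero _)⟩
  exact Nat.sSup_mem ⟨0, hzero⟩ (bddAbove_kConnected G)

theorem vconn_le_ncard_of_not_connected {s : Set V} (hs : s.Finite)
    (h : ¬ (G.induce sᶜ).Connected) : vconn G ≤ s.ncard :=
  csSup_le' fun _ hk => not_lt.mp fun hlt => h (hk.2 s hs hlt)

theorem vconn_add_two_le_natCard [Finite V] (hG : G ≠ ⊤) : vconn G + 2 ≤ Nat.card V := by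
  obtain ⟨u, v, huv, hnadj⟩ := ne_top_iff_exists_not_adj.mp hG
  have hle : vconn G ≤ ({u, v}ᶜ : Set V).ncard :=
    vconn_le_ncard_of_not_connected (toFinite _)
      (by rw [compl_compl]; exact not_connected_induce_pair huv hnadj)
  have hsum := ncard_add_ncard_compl ({u, v} : Set V)
  rw [ncard_pair huv] at hsum
  omega

theorem exists_ncard_le_vconn_not_connected [Finite V] (hG : G ≠ ⊤) :
    ∃ s : Set V, s.ncard ≤ vconn G ∧ ¬ (G.induce sᶜ).Connected := by
  by_contra! h
  have hcard := vconn_add_two_le_natCard hG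
  have hsucc : KConnected G (vconn G + 1) :=
    ⟨by omega, fun s _ hs => h s (Nat.lt_succ_iff.mp hs)⟩
  have := hsucc.le_vconn
  omega

end VertexConnectivity

section LexProd

variable {V W : Type*} {G : SimpleGraph V} {H : SimpleGraph W}

theorem connected_induce_compl_of_lexProd {s : Set V}
    (h : ((lexProd G H).induce (s ×ˢ (univ : Set W))ᶜ).Connected) :
    (G.induce sᶜ).Connected := by
  obtain ⟨⟨⟨-, w⟩, -⟩⟩ := h.nonempty
  refine h.of_surjective_of_adj_or_eq (fun x => ⟨x.1.1, fun hx => x.2 ⟨hx, mem_univ _⟩⟩) ?_ ?_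
  · rintro ⟨u, hu⟩
    exact ⟨⟨(u, w), fun hx => hu hx.1⟩, rfl⟩
  · rintro x y (hadj | ⟨heq, -⟩)
    · exact Or.inr hadj
    · exact Or.inl (Subtype.ext heq)

theorem connected_induce_lexProd {U : Set (V × W)} (hG : (G.induce (Prod.fst '' U)).Connected)
    (hU : (Prod.fst '' U).Nontrivial) : ((lexProd G H).induce U).Connected := by
  have : Nontrivial (Prod.fst '' U) := hU.coe_sort
  have hsection : ∀ a : Prod.fst '' U, ∃ x : U, x.1.1 = a.1 :=
    fun ⟨_, x, hx, hxa⟩ => ⟨⟨x, hx⟩, hxa⟩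
  choose σ hσ using hsection
  let σHom : G.induce (Prod.fst '' U) →g (lexProd G H).induce U :=
    ⟨σ, fun {a b} hab => Or.inl (by show G.Adj (σ a).1.1 (σ b).1.1; rw [hσ, hσ]; exact hab)⟩
  let fibre (x : U) : Prod.fst '' U := ⟨x.1.1, x.1, x.2, rfl⟩
  have hreach_σ (x : U) : ((lexProd G H).induce U).Reachable x (σ (fibre x)) := by
    obtain ⟨b, hb⟩ := hG.preconnected.exists_adj_of_nontrivial (fibre x)
    have hxb : ((lexProd G H).induce U).Adj x (σ b) :=
      Or.inl (by show G.Adj x.1.1 (σ b).1.1; rw [hσ]; exact hb)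
    exact hxb.reachable.trans (σHom.map_adj hb.symm).reachable
  have : Nonempty U := hG.nonempty.map σ
  exact Connected.mk fun x y =>
    (hreach_σ x).trans (((hG.preconnected _ _).map σHom).trans (hreach_σ y).symm)

theorem KConnected.lexProd [Finite V] [Finite W] [Nonempty W] {k : ℕ} (h : KConnected G k)
    (H : SimpleGraph W) : KConnected (lexProd G H) (k * Nat.card W) := by
  refine ⟨by rw [Nat.card_prod]; exact Nat.mul_lt_mul_of_pos_right h.1 Nat.card_pos,
    fun T hT hTk => ?_⟩
  set F : Set V := {u | ∀ w, (u, w) ∈ T}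
  have hF : F.ncard < k := by
    have hle : F.ncard * Nat.card W ≤ T.ncard := by
      rw [← ncard_univ W, ← ncard_prod]
      exact ncard_le_ncard (fun x hx => hx.1 x.2) hT
    exact lt_of_mul_lt_mul_right (hle.trans_lt hTk) (Nat.zero_le _)
  have hproj : Prod.fst '' Tᶜ = Fᶜ := by
    ext u
    simp [F]
  apply connected_induce_lexProd
  · rw [hproj]
    exact h.2 F (toFinite F) hF
  · rw [hproj, ← one_lt_ncard_iff_nontrivial]
    have hsum := ncard_add_ncard_compl F
    have hk := h.1
    omega

end LexProd

theorem vconn_lexProd_general {V W : Type*} [Fintype V] [Fintype W]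
    (G : SimpleGraph V) (H : SimpleGraph W) (hGc : G ≠ ⊤) :
    vconn (lexProd G H) = vconn G * Fintype.card W := by
  rw [← Nat.card_eq_fintype_card]
  obtain ⟨s, hs, hsep⟩ := exists_ncard_le_vconn_not_connected hGc
  apply le_antisymm
  · calc vconn (lexProd G H) ≤ (s ×ˢ (univ : Set W)).ncard :=
          vconn_le_ncard_of_not_connected (toFinite _)
            (mt connected_induce_compl_of_lexProd hsep)
      _ = s.ncard * Nat.card W := by rw [ncard_prod, ncard_univ]
      _ ≤ vconn G * Nat.card W := Nat.mul_le_mul_right _ hs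
  · rcases isEmpty_or_nonempty W with _ | _
    · simp
    · obtain ⟨u, -⟩ := ne_top_iff_exists_not_adj.mp hGc
      have : Nonempty V := ⟨u⟩
      exact ((kConnected_vconn G).lexProd H).le_vconn

/-- Yang–Xu: `κ(G ∘ H) = κ(G)|V(H)|` for `G` nontrivial, non-complete and connected. -/
theorem vconn_lexProd {V W : Type*} [Fintype V] [Fintype W]
    (G : SimpleGraph V) (H : SimpleGraph W) (hG : G.Connected)
    (hVn : 2 ≤ Fintype.card V) (hGc : G ≠ ⊤) :
    vconn (lexProd G H) = vconn G * Fintype.card W :=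
  vconn_lexProd_general G H hGc
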